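/- Let G be a totally disconnected locally compact group, φ : G → G a topological automorphism, and U an open compact subgroup. Then H_top(φ,U) = log [φ⁻¹(C(φ,U)) : C(φ,U)] + log Δ(φ), where C(φ,U) = ⋂_{n≥0} φ^{-n}(U). -/

import Mathlib

open Filter Topology MeasureTheory

variable {G : Type*} [Group G]

/-- The `n`-th `φ`-cotrajectory `Cₙ(φ,U) = ⋂_{i<n} φ^{-i}(U)`. -/
def cotrajN (φ : MulAut G) (U : Subgroup G) (n : ℕ) : Subgroup G :=
  ⨅ i ∈ Finset.range n, Subgroup.comap (φ ^ i).toMonoidHom U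

/-- `cₙ = [U : Cₙ(φ,U)]`. -/
noncomputable def entIdx (φ : MulAut G) (U : Subgroup G) (n : ℕ) : ℕ :=
  (cotrajN φ U n).relIndex U

/-- The topological entropy of `φ` with respect to `U`,
`H_top(φ,U) = lim_n log cₙ / n` (the limit exists, so it equals the `limsup`). -/
noncomputable def Htop (φ : MulAut G) (U : Subgroup G) : ℝ :=
  limsup (fun n : ℕ => Real.log (entIdx φ U n) / n) atTop

/-- The `φ`-cotrajectory `C(φ,U) = ⋂_{n≥0} φ^{-n}(U)`. -/
def cotraj (φ : MulAut G) (U : Subgroup G) : Subgroup G :=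
  ⨅ n : ℕ, Subgroup.comap (φ ^ n).toMonoidHom U

/-- The topological entropy `h_top(φ) = sup {H_top(φ,U) : U open compact subgroup}`. -/
noncomputable def htop [TopologicalSpace G] (φ : MulAut G) : EReal :=
  ⨆ (U : Subgroup G) (_ : IsOpen (U : Set G) ∧ IsCompact (U : Set G)), ((Htop φ U : ℝ) : EReal)

/-!
With `cₙ = [U : Cₙ]` one has `μ U = cₙ μ(Cₙ)`, and the modulus gives `μ(Cₙ) = Δ μ(φ⁻¹Cₙ)`.
Since `Cₙ₊₁ = U ∩ φ⁻¹(Cₙ)`, also `μ(φ⁻¹Cₙ) = [φ⁻¹Cₙ : Cₙ₊₁] μ(Cₙ₊₁)`. The sets `φ⁻¹(Cₙ)` decrease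
to `φ⁻¹(C)`, so by compactness `φ⁻¹(Cₙ) ⊆ φ⁻¹(C) U` for large `n`; as `C = U ∩ φ⁻¹(C)`, this
forces `[φ⁻¹Cₙ : Cₙ₊₁] = [φ⁻¹C : C]`. Hence eventually `cₙ₊₁ = cₙ [φ⁻¹C : C] Δ`, and
`log cₙ / n → log [φ⁻¹C : C] + log Δ`. The compactness of `φ⁻¹(U)` also comes from the modulus:
it is an open subgroup of finite Haar measure.
-/

open Pointwise

namespace Subgroup

theorem relIndex_eq_ncard_image_mk (H K : Subgroup G) :
    H.relIndex K = ((QuotientGroup.mk : G → G ⧸ H) '' K).ncard := by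
  have hsmul (k : K) : k • ((1 : G) : G ⧸ H) = ((k : G) : G ⧸ H) := by
    show ((k : G) • ((1 : G) : G ⧸ H)) = _
    rw [MulAction.Quotient.smul_coe, smul_eq_mul, mul_one]
  have hstab : MulAction.stabilizer K ((1 : G) : G ⧸ H) = H.subgroupOf K := by
    ext k
    simp [mem_subgroupOf, hsmul, QuotientGroup.eq]
  have horbit : MulAction.orbit K ((1 : G) : G ⧸ H) = QuotientGroup.mk '' K := by
    ext x
    simp [MulAction.mem_orbit_iff, hsmul]
  rw [relIndex, ← hstab, MulAction.index_stabilizer, horbit]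

theorem relIndex_eq_of_le_of_subset_mul {H K L : Subgroup G} (hKL : K ≤ L)
    (hL : (L : Set G) ⊆ K * H) : H.relIndex L = H.relIndex K := by
  simp only [relIndex_eq_ncard_image_mk]
  refine congrArg _ ((Set.image_mono hKL).antisymm ?_).symm
  rintro _ ⟨_, hl, rfl⟩
  obtain ⟨k, hk, h, hh, rfl⟩ := hL hl
  exact ⟨k, hk, QuotientGroup.eq.2 (by simpa using hh)⟩

theorem relIndex_ne_zero_of_isOpen_of_isCompact [TopologicalSpace G] [IsTopologicalGroup G]
    {H K : Subgroup G} (hH : IsOpen (H : Set G)) (hK : IsCompact (K : Set G)) :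
    H.relIndex K ≠ 0 := by
  have := QuotientGroup.discreteTopology hH
  rw [relIndex_eq_ncard_image_mk]
  exact ((Set.ncard_pos (hK.image QuotientGroup.continuous_mk).finite_of_discrete).2
    ⟨_, 1, K.one_mem, rfl⟩).ne'

theorem relIndex_mul_measure [MeasurableSpace G] [MeasurableMul G] (μ : Measure G)
    [μ.IsMulLeftInvariant] {H K : Subgroup G} (hH : MeasurableSet (H : Set G))
    (hK : MeasurableSet (K : Set G)) (hHK : H.relIndex K ≠ 0) :
    H.relIndex K * μ ((H ⊓ K : Subgroup G) : Set G) = μ K := by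
  have hemb : MeasurableEmbedding K.subtype := MeasurableEmbedding.subtype_coe hK
  have : MeasurableMul K :=
    ⟨fun c => ((measurable_const_mul (c : G)).comp measurable_subtype_coe).subtype_mk,
      fun c => ((measurable_mul_const (c : G)).comp measurable_subtype_coe).subtype_mk⟩
  have := Measure.IsMulLeftInvariant.comap μ hemb
  have : (H.subgroupOf K).FiniteIndex := ⟨hHK⟩
  have key := (H.subgroupOf K).index_mul_measure (hH.preimage measurable_subtype_coe)
    (μ.comap K.subtype)
  rwa [hemb.comap_apply, hemb.comap_apply, Set.image_univ, ← coe_map, subgroupOf_map_subtype,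
    coe_subtype, Subtype.range_coe] at key

theorem isCompact_of_isOpen_of_measure_ne_top [TopologicalSpace G]
    [IsTopologicalGroup G] [LocallyCompactSpace G] [MeasurableSpace G] [BorelSpace G]
    (μ : Measure G) [μ.IsHaarMeasure] {H : Subgroup G} (hH : IsOpen (H : Set G))
    (hμ : μ H ≠ ⊤) : IsCompact (H : Set G) := by
  rw [isCompact_iff_compactSpace]
  by_contra hnc
  have := not_compactSpace_iff.1 hnc
  have := hH.locallyCompactSpace
  have hemb : IsOpenEmbedding H.subtype := hH.isOpenEmbedding_subtypeVal
  have := Measure.IsHaarMeasure.comap (mH := inferInstance) μ hemb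
  have h := measure_univ_of_isMulLeftInvariant (μ.comap H.subtype)
  rw [hemb.measurableEmbedding.comap_apply, Set.image_univ, coe_subtype, Subtype.range_coe] at h
  exact hμ h

end Subgroup

theorem tendsto_div_natCast_of_tendsto_sub {b : ℕ → ℝ} {L : ℝ}
    (h : Tendsto (fun n => b (n + 1) - b n) atTop (𝓝 L)) :
    Tendsto (fun n : ℕ => b n / n) atTop (𝓝 L) := by
  have hmean := h.cesaro
  simp only [Finset.sum_range_sub (fun n => b n)] at hmean
  convert hmean.add (tendsto_const_div_atTop_nhds_zero_nat (b 0)) using 2 with n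
  · ring
  · simp

theorem measure_eq_ofReal_mul_measure_comap [MeasurableSpace G] (μ : Measure G) {φ : MulAut G}
    {Δ : ℝ} (hmod : ∀ s : Set G, μ (φ '' s) = ENNReal.ofReal Δ * μ s) (K : Subgroup G) :
    μ K = ENNReal.ofReal Δ * μ (K.comap φ.toMonoidHom) := by
  rw [Subgroup.coe_comap, ← hmod, MulEquiv.coe_toMonoidHom, Set.image_preimage_eq _ φ.surjective]

section Cotrajectory

variable {φ : MulAut G} {U : Subgroup G}

theorem mem_cotrajN {n : ℕ} {x : G} : x ∈ cotrajN φ U n ↔ ∀ i < n, (φ ^ i) x ∈ U := by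
  simp [cotrajN, Subgroup.mem_iInf, Subgroup.mem_comap]

theorem mem_cotraj {x : G} : x ∈ cotraj φ U ↔ ∀ i, (φ ^ i) x ∈ U := by
  simp [cotraj, Subgroup.mem_iInf, Subgroup.mem_comap]

theorem cotrajN_zero : cotrajN φ U 0 = ⊤ := by
  simp [cotrajN]

theorem cotrajN_succ (n : ℕ) :
    cotrajN φ U (n + 1) = U ⊓ (cotrajN φ U n).comap φ.toMonoidHom := by
  ext x
  simp only [mem_cotrajN, Subgroup.mem_inf, Subgroup.mem_comap, MulEquiv.coe_toMonoidHom,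
    Nat.forall_lt_succ_left, pow_zero, pow_succ, MulAut.one_apply, MulAut.mul_apply]

theorem cotrajN_antitone : Antitone (cotrajN φ U) :=
  fun _ _ hmn _ hx => mem_cotrajN.2 fun i hi => mem_cotrajN.1 hx i (hi.trans_le hmn)

theorem cotraj_le_cotrajN (n : ℕ) : cotraj φ U ≤ cotrajN φ U n :=
  fun _ hx => mem_cotrajN.2 fun i _ => mem_cotraj.1 hx i

theorem cotrajN_le {n : ℕ} (hn : n ≠ 0) : cotrajN φ U n ≤ U :=
  fun x hx => by simpa using mem_cotrajN.1 hx 0 (Nat.pos_of_ne_zero hn)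

theorem cotraj_eq_iInf_cotrajN : cotraj φ U = ⨅ n, cotrajN φ U n := by
  ext x
  simp only [Subgroup.mem_iInf, mem_cotraj, mem_cotrajN]
  exact ⟨fun h _ i _ => h i, fun h i => h (i + 1) i i.lt_succ_self⟩

theorem cotraj_eq_inf_comap : cotraj φ U = U ⊓ (cotraj φ U).comap φ.toMonoidHom := by
  ext x
  simp only [mem_cotraj, Subgroup.mem_inf, Subgroup.mem_comap, MulEquiv.coe_toMonoidHom]
  rw [← Nat.and_forall_add_one]
  simp only [pow_zero, pow_succ, MulAut.one_apply, MulAut.mul_apply]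

theorem relIndex_cotraj_comap_eq :
    (cotraj φ U).relIndex ((cotraj φ U).comap φ.toMonoidHom) =
      U.relIndex ((cotraj φ U).comap φ.toMonoidHom) := by
  rw [← Subgroup.inf_relIndex_right U, ← cotraj_eq_inf_comap]

variable [TopologicalSpace G]

theorem isOpen_cotrajN (hφ : Continuous φ) (hUo : IsOpen (U : Set G)) (n : ℕ) :
    IsOpen (cotrajN φ U n : Set G) := by
  induction n with
  | zero => simp [cotrajN_zero]
  | succ n ih =>
    rw [cotrajN_succ, Subgroup.coe_inf, Subgroup.coe_comap]
    exact hUo.inter (ih.preimage hφ)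

variable [IsTopologicalGroup G]

theorem isClosed_cotrajN (hφ : Continuous φ) (hUo : IsOpen (U : Set G)) (n : ℕ) :
    IsClosed (cotrajN φ U n : Set G) :=
  Subgroup.isClosed_of_isOpen _ (isOpen_cotrajN hφ hUo n)

theorem isClosed_cotraj (hφ : Continuous φ) (hUo : IsOpen (U : Set G)) :
    IsClosed (cotraj φ U : Set G) := by
  rw [cotraj_eq_iInf_cotrajN, Subgroup.coe_iInf]
  exact isClosed_iInter (isClosed_cotrajN hφ hUo)

theorem isCompact_comap_cotrajN (hφ : Continuous φ) (hUo : IsOpen (U : Set G))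
    (hφU : IsCompact (U.comap φ.toMonoidHom : Set G)) {n : ℕ} (hn : n ≠ 0) :
    IsCompact ((cotrajN φ U n).comap φ.toMonoidHom : Set G) :=
  hφU.of_isClosed_subset ((isClosed_cotrajN hφ hUo n).preimage hφ)
    (Subgroup.comap_mono (cotrajN_le hn))

theorem isCompact_comap_cotraj (hφ : Continuous φ) (hUo : IsOpen (U : Set G))
    (hφU : IsCompact (U.comap φ.toMonoidHom : Set G)) :
    IsCompact ((cotraj φ U).comap φ.toMonoidHom : Set G) :=
  hφU.of_isClosed_subset ((isClosed_cotraj hφ hUo).preimage hφ)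
    (Subgroup.comap_mono ((cotraj_le_cotrajN 1).trans (cotrajN_le one_ne_zero)))

/-- `φ⁻¹(Cₙ)` decreases to `φ⁻¹(C)`, so by compactness it eventually lies in the open
neighbourhood `φ⁻¹(C) U` of `φ⁻¹(C)`. -/
theorem eventually_comap_cotrajN_subset_mul (hφ : Continuous φ) (hUo : IsOpen (U : Set G))
    (hφU : IsCompact (U.comap φ.toMonoidHom : Set G)) :
    ∀ᶠ n in atTop, ((cotrajN φ U n).comap φ.toMonoidHom : Set G) ⊆
      ((cotraj φ U).comap φ.toMonoidHom : Set G) * U := by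
  set V : ℕ → Set G := fun n => (cotrajN φ U (n + 1)).comap φ.toMonoidHom
  have hV : Antitone V := fun m n hmn =>
    Subgroup.comap_mono (cotrajN_antitone (Nat.succ_le_succ hmn))
  have hnhds : ∀ x ∈ ⋂ n, V n, ((cotraj φ U).comap φ.toMonoidHom : Set G) * U ∈ 𝓝 x := by
    intro x hx
    refine hUo.mul_left.mem_nhds ⟨x, ?_, 1, U.one_mem, mul_one x⟩
    rw [Set.mem_iInter] at hx
    simp only [SetLike.mem_coe, Subgroup.mem_comap, cotraj_eq_iInf_cotrajN, Subgroup.mem_iInf]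
    exact fun n => cotrajN_antitone n.le_succ (hx n)
  obtain ⟨i, hi⟩ := exists_subset_nhds_of_isCompact' hV.directed_ge
    (fun n => isCompact_comap_cotrajN hφ hUo hφU n.succ_ne_zero)
    (fun n => (isClosed_cotrajN hφ hUo _).preimage hφ) hnhds
  filter_upwards [eventually_ge_atTop (i + 1)] with n hn
  exact (SetLike.coe_subset_coe.2 (Subgroup.comap_mono (cotrajN_antitone hn))).trans hi

theorem entIdx_ne_zero (hφ : Continuous φ) (hUo : IsOpen (U : Set G))
    (hUc : IsCompact (U : Set G)) (n : ℕ) : entIdx φ U n ≠ 0 :=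
  Subgroup.relIndex_ne_zero_of_isOpen_of_isCompact (isOpen_cotrajN hφ hUo n) hUc

theorem relIndex_cotraj_comap_ne_zero (hφ : Continuous φ) (hUo : IsOpen (U : Set G))
    (hφU : IsCompact (U.comap φ.toMonoidHom : Set G)) :
    (cotraj φ U).relIndex ((cotraj φ U).comap φ.toMonoidHom) ≠ 0 := by
  rw [relIndex_cotraj_comap_eq]
  exact Subgroup.relIndex_ne_zero_of_isOpen_of_isCompact hUo (isCompact_comap_cotraj hφ hUo hφU)

variable [MeasurableSpace G] [BorelSpace G] (μ : Measure G) [μ.IsHaarMeasure]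

theorem isCompact_comap_of_measure_image [LocallyCompactSpace G] (hφ : Continuous φ) {Δ : ℝ}
    (hΔ : 0 < Δ) (hmod : ∀ s : Set G, μ (φ '' s) = ENNReal.ofReal Δ * μ s) {K : Subgroup G}
    (hKo : IsOpen (K : Set G)) (hKc : IsCompact (K : Set G)) :
    IsCompact (K.comap φ.toMonoidHom : Set G) := by
  refine Subgroup.isCompact_of_isOpen_of_measure_ne_top μ (hKo.preimage hφ) fun htop => ?_
  have hK := measure_eq_ofReal_mul_measure_comap μ hmod K
  rw [htop, ENNReal.mul_top (by simpa using hΔ)] at hK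
  exact hKc.measure_lt_top.ne hK

theorem entIdx_mul_measure_cotrajN (hφ : Continuous φ) (hUo : IsOpen (U : Set G))
    (hUc : IsCompact (U : Set G)) {n : ℕ} (hn : n ≠ 0) :
    entIdx φ U n * μ (cotrajN φ U n) = μ U := by
  have h := Subgroup.relIndex_mul_measure μ (isOpen_cotrajN hφ hUo n).measurableSet
    hUo.measurableSet (entIdx_ne_zero hφ hUo hUc n)
  rwa [inf_of_le_left (cotrajN_le hn)] at h

theorem eventually_relIndex_cotraj_mul_measure_cotrajN_succ (hφ : Continuous φ)
    (hUo : IsOpen (U : Set G)) (hφU : IsCompact (U.comap φ.toMonoidHom : Set G)) :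
    ∀ᶠ n in atTop, (cotraj φ U).relIndex ((cotraj φ U).comap φ.toMonoidHom) *
      μ (cotrajN φ U (n + 1)) = μ ((cotrajN φ U n).comap φ.toMonoidHom) := by
  filter_upwards [eventually_comap_cotrajN_subset_mul hφ hUo hφU] with n hn
  have hindex : U.relIndex ((cotrajN φ U n).comap φ.toMonoidHom) =
      (cotraj φ U).relIndex ((cotraj φ U).comap φ.toMonoidHom) := by
    rw [relIndex_cotraj_comap_eq,
      Subgroup.relIndex_eq_of_le_of_subset_mul (Subgroup.comap_mono (cotraj_le_cotrajN n)) hn]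
  have h := Subgroup.relIndex_mul_measure μ hUo.measurableSet
    ((isOpen_cotrajN hφ hUo n).preimage hφ).measurableSet
    (hindex ▸ relIndex_cotraj_comap_ne_zero hφ hUo hφU)
  rwa [← cotrajN_succ, hindex] at h

theorem eventually_entIdx_succ (hφ : Continuous φ) {Δ : ℝ} (hΔ : 0 < Δ)
    (hmod : ∀ s : Set G, μ (φ '' s) = ENNReal.ofReal Δ * μ s) (hUo : IsOpen (U : Set G))
    (hUc : IsCompact (U : Set G)) (hφU : IsCompact (U.comap φ.toMonoidHom : Set G)) :
    ∀ᶠ n in atTop, (entIdx φ U (n + 1) : ℝ) =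
      entIdx φ U n * (cotraj φ U).relIndex ((cotraj φ U).comap φ.toMonoidHom) * Δ := by
  filter_upwards [eventually_relIndex_cotraj_mul_measure_cotrajN_succ μ hφ hUo hφU,
    eventually_ne_atTop 0] with n hrel hn
  have h0 : μ (cotrajN φ U (n + 1)) ≠ 0 :=
    (isOpen_cotrajN hφ hUo _).measure_ne_zero μ ⟨1, Subgroup.one_mem _⟩
  have htop : μ (cotrajN φ U (n + 1)) ≠ ⊤ :=
    ((measure_mono (cotrajN_le n.succ_ne_zero)).trans_lt hUc.measure_lt_top).ne
  have key : (entIdx φ U (n + 1) : ENNReal) = entIdx φ U n *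
      (cotraj φ U).relIndex ((cotraj φ U).comap φ.toMonoidHom) * ENNReal.ofReal Δ := by
    refine (ENNReal.mul_left_inj h0 htop).1 ?_
    rw [entIdx_mul_measure_cotrajN μ hφ hUo hUc n.succ_ne_zero,
      ← entIdx_mul_measure_cotrajN μ hφ hUo hUc hn, measure_eq_ofReal_mul_measure_comap μ hmod,
      ← hrel]
    ring
  simpa [ENNReal.toReal_ofReal hΔ.le] using congrArg ENNReal.toReal key

end Cotrajectory

theorem limit_free_formula_with_modulus_general [TopologicalSpace G] [IsTopologicalGroup G]
    [LocallyCompactSpace G] [MeasurableSpace G] [BorelSpace G]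
    (μ : Measure G) [μ.IsHaarMeasure]
    (φ : MulAut G) (hφ : Continuous φ)
    (Δ : ℝ) (hΔ : 0 < Δ) (hmod : ∀ s : Set G, μ (⇑φ '' s) = ENNReal.ofReal Δ * μ s)
    (U : Subgroup G) (hUo : IsOpen (U : Set G)) (hUc : IsCompact (U : Set G)) :
    Htop φ U =
      Real.log ((cotraj φ U).relIndex (Subgroup.comap φ.toMonoidHom (cotraj φ U))) +
        Real.log Δ := by
  have hφU := isCompact_comap_of_measure_image μ hφ hΔ hmod hUo hUc
  have hs : ((cotraj φ U).relIndex ((cotraj φ U).comap φ.toMonoidHom) : ℝ) ≠ 0 :=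
    Nat.cast_ne_zero.2 (relIndex_cotraj_comap_ne_zero hφ hUo hφU)
  have hc (n : ℕ) : (entIdx φ U n : ℝ) ≠ 0 := Nat.cast_ne_zero.2 (entIdx_ne_zero hφ hUo hUc n)
  have hstep : Tendsto (fun n => Real.log (entIdx φ U (n + 1)) - Real.log (entIdx φ U n)) atTop
      (𝓝 (Real.log ((cotraj φ U).relIndex ((cotraj φ U).comap φ.toMonoidHom)) +
        Real.log Δ)) := by
    refine tendsto_const_nhds.congr' ?_
    filter_upwards [eventually_entIdx_succ μ hφ hΔ hmod hUo hUc hφU] with n hn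
    rw [hn, Real.log_mul (mul_ne_zero (hc n) hs) hΔ.ne', Real.log_mul (hc n) hs]
    ring
  exact (tendsto_div_natCast_of_tendsto_sub hstep).limsup_eq

theorem limit_free_formula_with_modulus [TopologicalSpace G] [IsTopologicalGroup G]
    [LocallyCompactSpace G] [TotallyDisconnectedSpace G] [MeasurableSpace G] [BorelSpace G]
    (μ : Measure G) [μ.IsHaarMeasure]
    (φ : MulAut G) (hφ : Continuous φ) (hφ' : Continuous φ⁻¹)
    (Δ : ℝ) (hΔ : 0 < Δ) (hmod : ∀ s : Set G, μ (⇑φ '' s) = ENNReal.ofReal Δ * μ s)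
    (U : Subgroup G) (hUo : IsOpen (U : Set G)) (hUc : IsCompact (U : Set G)) :
    Htop φ U =
      Real.log ((cotraj φ U).relIndex (Subgroup.comap φ.toMonoidHom (cotraj φ U))) +
        Real.log Δ :=
  limit_free_formula_with_modulus_general μ φ hφ Δ hΔ hmod U hUo hUc
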